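/- With the notation above, for any real polynomial f, the smallest (*)-closed set χ(f) containing f is finite. -/

import Mathlib

open Polynomial

def StarClosed (m : ℕ → ℝ) (χ : Set (Polynomial ℝ)) : Prop :=
  (∀ g ∈ χ, ∀ i : ℕ, i ≤ g.natDegree → derivative^[i] g ∈ χ) ∧
  (∀ g ∈ χ, (∑ i ∈ Finset.Icc 1 g.natDegree, C (m i) * derivative^[i] g) ∈ χ)

/-! Every polynomial that the operations of a (*)-closed set produce from `f`, other than
`f = f^(0)` itself, has degree below that of `f` (or is `0` when `f` is constant). So a finite
(*)-closed set containing `f` is obtained by adjoining `f` to a union of finite (*)-closed sets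
for these polynomials, which exist by induction on the degree. -/

variable {m : ℕ → ℝ}

def starSuccessors (m : ℕ → ℝ) (f : ℝ[X]) : Set ℝ[X] :=
  insert (∑ i ∈ Finset.Icc 1 f.natDegree, C (m i) * derivative^[i] f)
    ((fun i => derivative^[i] f) '' Set.Icc 1 f.natDegree)

theorem starSuccessors_finite (m : ℕ → ℝ) (f : ℝ[X]) : (starSuccessors m f).Finite :=
  ((Set.finite_Icc _ _).image _).insert _

theorem natDegree_le_of_mem_starSuccessors {f g : ℝ[X]} (hg : g ∈ starSuccessors m f) :
    g.natDegree ≤ f.natDegree - 1 := by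
  have hder : ∀ i, 1 ≤ i → (derivative^[i] f).natDegree ≤ f.natDegree - 1 := fun i hi =>
    (natDegree_iterate_derivative f i).trans (by omega)
  rcases hg with rfl | ⟨i, hi, rfl⟩
  · refine natDegree_sum_le_of_forall_le _ _ fun i hi => ?_
    exact (natDegree_C_mul_le _ _).trans (hder i (Finset.mem_Icc.mp hi).1)
  · exact hder i hi.1

theorem starSuccessors_subset_zero_of_natDegree_eq_zero {f : ℝ[X]} (hf : f.natDegree = 0) :
    starSuccessors m f ⊆ {0} := by
  simp [starSuccessors, hf]

theorem starClosed_zero (m : ℕ → ℝ) : StarClosed m {0} := by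
  simp [StarClosed]

namespace StarClosed

theorem iUnion {ι : Sort*} {χ : ι → Set ℝ[X]} (h : ∀ j, StarClosed m (χ j)) :
    StarClosed m (⋃ j, χ j) := by
  refine ⟨fun g hg i hi => ?_, fun g hg => ?_⟩ <;> obtain ⟨j, hj⟩ := Set.mem_iUnion.mp hg
  · exact Set.mem_iUnion.mpr ⟨j, (h j).1 g hj i hi⟩
  · exact Set.mem_iUnion.mpr ⟨j, (h j).2 g hj⟩

theorem insert {χ : Set ℝ[X]} {f : ℝ[X]} (hχ : StarClosed m χ) (hf : starSuccessors m f ⊆ χ) :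
    StarClosed m (insert f χ) := by
  refine ⟨fun g hg i hi => ?_, fun g hg => ?_⟩ <;> rcases hg with rfl | hg
  · rcases Nat.eq_zero_or_pos i with rfl | hpos
    · exact Set.mem_insert _ _
    · exact Or.inr (hf (Or.inr ⟨i, ⟨hpos, hi⟩, rfl⟩))
  · exact Or.inr (hχ.1 g hg i hi)
  · exact Or.inr (hf (Set.mem_insert _ _))
  · exact Or.inr (hχ.2 g hg)

end StarClosed

theorem exists_finite_starClosed_superset {s : Set ℝ[X]} (hs : s.Finite)
    (h : ∀ g ∈ s, ∃ χ : Set ℝ[X], χ.Finite ∧ StarClosed m χ ∧ g ∈ χ) :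
    ∃ χ : Set ℝ[X], χ.Finite ∧ StarClosed m χ ∧ s ⊆ χ := by
  choose χ hfin hclosed hmem using h
  refine ⟨⋃ g ∈ s, χ g ‹_›, hs.biUnion' hfin, ?_, fun g hg => Set.mem_iUnion₂.mpr ⟨g, hg, hmem g hg⟩⟩
  exact StarClosed.iUnion fun g => StarClosed.iUnion fun hg => hclosed g hg

theorem exists_finite_starClosed_mem_of_starSuccessors {f : ℝ[X]}
    (h : ∃ χ : Set ℝ[X], χ.Finite ∧ StarClosed m χ ∧ starSuccessors m f ⊆ χ) :
    ∃ χ : Set ℝ[X], χ.Finite ∧ StarClosed m χ ∧ f ∈ χ :=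
  let ⟨χ, hfin, hclosed, hsucc⟩ := h
  ⟨insert f χ, hfin.insert f, hclosed.insert hsucc, Set.mem_insert f χ⟩

theorem exists_finite_starClosed_mem (m : ℕ → ℝ) (f : ℝ[X]) :
    ∃ χ : Set ℝ[X], χ.Finite ∧ StarClosed m χ ∧ f ∈ χ := by
  suffices ∀ n, ∀ f : ℝ[X], f.natDegree ≤ n →
      ∃ χ : Set ℝ[X], χ.Finite ∧ StarClosed m χ ∧ f ∈ χ from this _ f le_rfl
  intro n
  induction n with
  | zero =>
    intro f hf
    exact exists_finite_starClosed_mem_of_starSuccessors ⟨{0}, Set.finite_singleton 0,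
      starClosed_zero m, starSuccessors_subset_zero_of_natDegree_eq_zero (Nat.le_zero.mp hf)⟩
  | succ n ih =>
    intro f hf
    refine exists_finite_starClosed_mem_of_starSuccessors <|
      exists_finite_starClosed_superset (starSuccessors_finite m f) fun g hg => ih g ?_
    exact (natDegree_le_of_mem_starSuccessors hg).trans (by omega)

theorem stmt_10 (m : ℕ → ℝ) (f : Polynomial ℝ) :
    (⋂₀ {χ : Set (Polynomial ℝ) | StarClosed m χ ∧ f ∈ χ}).Finite := by
  obtain ⟨χ, hfin, hclosed, hf⟩ := exists_finite_starClosed_mem m f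
  exact hfin.subset (Set.sInter_subset_of_mem ⟨hclosed, hf⟩)
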